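/- arXiv:2501.13760 — 2 statements merged into one kernel-verified Lean document; each statement's English description precedes it below -/
import Mathlib

section
/- For the complete bipartite graph K_{m,n} with m, n ≥ 1, the total transitivity satisfies Tr_t(K_{m,n}) = min{m, n}. -/
/-
Every part of a total transitive partition dominates itself, so it contains an edge
of `K_{m,n}` and hence meets both sides; as the parts are disjoint, there are at most `min m n`
of them. Conversely, if `f` and `g` map the two sides onto `Fin k`, the fibres of `Sum.elim f g`
form a total transitive partition: every part meets both sides, so it dominates every vertex.
-/

/-- A total transitive partition of `G` into `k` parts: the parts are nonempty, they
partition the vertex set, and `V_i` dominates `V_j` for all `i ≤ j`. -/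
def TTPartition {V : Type*} (G : SimpleGraph V) (k : ℕ) (P : Fin k → Set V) : Prop :=
  (∀ i, (P i).Nonempty) ∧
  (∀ v : V, ∃! i, v ∈ P i) ∧
  (∀ i j : Fin k, i ≤ j → ∀ v ∈ P j, ∃ u ∈ P i, G.Adj u v)

namespace TTPartition

variable {V : Type*} {G : SimpleGraph V} {k : ℕ} {P : Fin k → Set V}

theorem eq_of_mem (hP : TTPartition G k P) {v : V} {i j : Fin k} (hi : v ∈ P i) (hj : v ∈ P j) :
    i = j :=
  (hP.2.1 v).unique hi hj

theorem exists_adj (hP : TTPartition G k P) (i : Fin k) : ∃ u ∈ P i, ∃ v ∈ P i, G.Adj u v := by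
  obtain ⟨v, hv⟩ := hP.1 i
  obtain ⟨u, hu, huv⟩ := hP.2.2 i i le_rfl v hv
  exact ⟨u, hu, v, hv, huv⟩

theorem le_card_of_forall_exists_mem {α : Type*} [Fintype α] (hP : TTPartition G k P) (f : α → V)
    (hf : ∀ i, ∃ a, f a ∈ P i) : k ≤ Fintype.card α := by
  choose g hg using hf
  have hg_inj : Function.Injective g := fun i j hij => hP.eq_of_mem (hg i) (hij ▸ hg j)
  simpa using Fintype.card_le_of_injective g hg_inj

end TTPartition

section CompleteBipartite

variable {α β : Type*}

theorem TTPartition.exists_inl_and_exists_inr {k : ℕ} {P : Fin k → Set (α ⊕ β)}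
    (hP : TTPartition (completeBipartiteGraph α β) k P) (i : Fin k) :
    (∃ a, Sum.inl a ∈ P i) ∧ ∃ b, Sum.inr b ∈ P i := by
  obtain ⟨u, hu, v, hv, huv⟩ := hP.exists_adj i
  rcases u with a | b <;> rcases v with a' | b' <;> simp at huv
  · exact ⟨⟨a, hu⟩, b', hv⟩
  · exact ⟨⟨a', hv⟩, b, hu⟩

theorem TTPartition.le_min_card_of_completeBipartiteGraph [Fintype α] [Fintype β] {k : ℕ}
    {P : Fin k → Set (α ⊕ β)} (hP : TTPartition (completeBipartiteGraph α β) k P) :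
    k ≤ min (Fintype.card α) (Fintype.card β) :=
  le_min (hP.le_card_of_forall_exists_mem Sum.inl fun i => (hP.exists_inl_and_exists_inr i).1)
    (hP.le_card_of_forall_exists_mem Sum.inr fun i => (hP.exists_inl_and_exists_inr i).2)

theorem ttPartition_completeBipartiteGraph_fibres {k : ℕ} {f : α → Fin k} {g : β → Fin k}
    (hf : Function.Surjective f) (hg : Function.Surjective g) :
    TTPartition (completeBipartiteGraph α β) k fun i => Sum.elim f g ⁻¹' {i} := by
  refine ⟨fun i => ?_, fun v => ⟨Sum.elim f g v, rfl, fun j hj => hj.symm⟩, ?_⟩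
  · obtain ⟨a, ha⟩ := hf i
    exact ⟨Sum.inl a, ha⟩
  · intro i _ _ v _
    obtain ⟨a, ha⟩ := hf i
    obtain ⟨b, hb⟩ := hg i
    rcases v with _ | _
    · exact ⟨Sum.inr b, hb, by simp⟩
    · exact ⟨Sum.inl a, ha, by simp⟩

end CompleteBipartite

theorem Fin.exists_surjective_of_le {k m : ℕ} (hk : 0 < k) (hkm : k ≤ m) :
    ∃ f : Fin m → Fin k, Function.Surjective f :=
  haveI : Nonempty (Fin k) := Fin.pos_iff_nonempty.mp hk
  ⟨_, Function.invFun_surjective (Fin.castLE_injective hkm)⟩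

/-- The total transitivity of the complete bipartite graph `K_{m,n}` (for `m, n ≥ 1`)
equals `min m n`. -/
theorem stmt4 (m n : ℕ) (hm : 1 ≤ m) (hn : 1 ≤ n) :
    IsGreatest {k : ℕ | ∃ P : Fin k → Set (Fin m ⊕ Fin n),
      TTPartition (completeBipartiteGraph (Fin m) (Fin n)) k P} (min m n) := by
  constructor
  · have hk : 0 < min m n := lt_min hm hn
    obtain ⟨f, hf⟩ := Fin.exists_surjective_of_le hk (min_le_left m n)
    obtain ⟨g, hg⟩ := Fin.exists_surjective_of_le hk (min_le_right m n)
    exact ⟨_, ttPartition_completeBipartiteGraph_fibres hf hg⟩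
  · rintro k ⟨P, hP⟩
    simpa using hP.le_min_card_of_completeBipartiteGraph
end

section
/- Let G = (S ∪ K, E) be a split graph with no isolated vertices, where S is an independent set and K is a clique, and let π = {V_1, V_2, ..., V_p} be a total transitive partition of G. If x ∈ S has deg(x) = 1 and y ∈ K is its unique neighbour (its support vertex), then neither x nor y can belong to V_t for any t ≥ 2; that is, x, y ∈ V_1. -/
/-!
If `y` is the only neighbour of `x` and `x ∈ V_j`, then `V_1` and `V_j` both dominate `x`, so `y`
lies in both parts; hence `V_j = V_1` (index `0` in Lean), and `y` shares this part with `x`.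
-/

namespace TTPartition

variable {V : Type*} {G : SimpleGraph V} {k : ℕ} {P : Fin k → Set V}

theorem mem_of_forall_adj_eq (hP : TTPartition G k P) {x y : V}
    (hy : ∀ z, G.Adj x z → z = y) {i j : Fin k} (hij : i ≤ j) (hx : x ∈ P j) : y ∈ P i := by
  obtain ⟨u, hu, hux⟩ := hP.2.2 i j hij x hx
  rwa [← hy u hux.symm]

theorem val_eq_zero_of_forall_adj_eq (hP : TTPartition G k P) {x y : V}
    (hy : ∀ z, G.Adj x z → z = y) {j : Fin k} (hx : x ∈ P j) : (j : ℕ) = 0 := by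
  have h : (⟨0, j.pos⟩ : Fin k) = j :=
    hP.eq_of_mem (hP.mem_of_forall_adj_eq hy (Nat.zero_le _) hx)
      (hP.mem_of_forall_adj_eq hy le_rfl hx)
  exact (congrArg Fin.val h).symm

end TTPartition

theorem stmt14_general {V : Type*} (G : SimpleGraph V)
    (p : ℕ) (P : Fin p → Set V) (hP : TTPartition G p P)
    (x y : V)
    (huniq : ∀ z : V, G.Adj x z → z = y) :
    (∀ i : Fin p, x ∈ P i → (i : ℕ) = 0) ∧ (∀ i : Fin p, y ∈ P i → (i : ℕ) = 0) := by
  refine ⟨fun i hx => hP.val_eq_zero_of_forall_adj_eq huniq hx, fun i hy => ?_⟩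
  obtain ⟨j, hxj, -⟩ := hP.2.1 x
  rw [hP.eq_of_mem hy (hP.mem_of_forall_adj_eq huniq le_rfl hxj)]
  exact hP.val_eq_zero_of_forall_adj_eq huniq hxj

/-- In any total transitive partition of a split graph, a degree-one vertex `x ∈ S` and
its unique neighbour (support vertex) `y ∈ K` must both lie in the first part `V_1`,
i.e. neither can lie in `V_t` for `t ≥ 2`. -/
theorem stmt14 {V : Type*} [Fintype V] (G : SimpleGraph V)
    (S K : Set V) (hdisj : Disjoint S K) (hcover : S ∪ K = Set.univ)
    (hS : ∀ u ∈ S, ∀ v ∈ S, ¬ G.Adj u v)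
    (hK : G.IsClique K)
    (hiso : ∀ v : V, ∃ u : V, G.Adj v u)
    (p : ℕ) (P : Fin p → Set V) (hP : TTPartition G p P)
    (x y : V) (hx : x ∈ S) (hy : y ∈ K) (hxy : G.Adj x y)
    (huniq : ∀ z : V, G.Adj x z → z = y) :
    (∀ i : Fin p, x ∈ P i → (i : ℕ) = 0) ∧ (∀ i : Fin p, y ∈ P i → (i : ℕ) = 0) :=
  stmt14_general G p P hP x y huniq
end
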